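/- Assume θ_1 < 1 and write w_θ(x,Q) := w_θ(x,Q;𝟏) with 𝟏=(1,…,1)∈ℝ^K. Then for all x∈ℝ^K, Q∈Δ(L)^K and every non-revealing mixed action τ̄∈Δ(J): w_θ(x,Q) ≤ (1−θ_1)·max_{i∈I} w_{θ^+}( (x − θ_1·G^Q_{iτ̄})/(1−θ_1), Q ), where G^{k,Q}_{iτ̄} := Σ_{ℓ,j} Q(ℓ|k)τ̄(j)G^{kℓ}(i,j). -/

import Mathlib

open scoped BigOperators

noncomputable section RepeatedGames

/-- Probability of a finite history (list of action pairs, in chronological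
order) under behavioral strategies `s`, `t` (which map the list of past action
pairs to a mixed action). -/
def probH {I J : Type*} (s : List (I × J) → I → ℝ) (t : List (I × J) → J → ℝ) :
    List (I × J) → ℝ
  | [] => 1
  | a :: h =>
      s [] a.1 * t [] a.2 *
        probH (fun h' => s (a :: h')) (fun h' => t (a :: h')) h

/-- Expected stage payoff at stage `m+1` (i.e. after `m` completed stages). -/
def stagePay {I J : Type*} [Fintype I] [Fintype J]
    (s : List (I × J) → I → ℝ) (t : List (I × J) → J → ℝ)
    (g : I → J → ℝ) (m : ℕ) : ℝ :=
  ∑ h : Fin m → I × J,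
    probH s t (List.ofFn h) *
      ∑ i, ∑ j, s (List.ofFn h) i * t (List.ofFn h) j * g i j

/-- Behavioral strategies of a player with type set `X` and action set `A`,
observing histories in `(I × J)^*`. -/
def Strat (I J X A : Type*) [Fintype A] : Type _ :=
  {f : X → List (I × J) → A → ℝ // ∀ x h, f x h ∈ stdSimplex ℝ A}

instance {I J X A : Type*} [Fintype A] [Nonempty A] :
    Nonempty (Strat I J X A) := by
  refine ⟨⟨fun _ _ _ => (Fintype.card A : ℝ)⁻¹, fun x h => ⟨fun a => by positivity, ?_⟩⟩⟩
  have hA : (Fintype.card A : ℝ) ≠ 0 := by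
    exact_mod_cast Fintype.card_ne_zero
  simp [Finset.sum_const, Finset.card_univ, nsmul_eq_mul, mul_inv_cancel₀ hA]

/-- The auxiliary `θ`-weighted payoff `γ_θ(π, ŝ, t̂; ζ)`. -/
def payA {I J K L : Type*} [Fintype I] [Fintype J] [Fintype K] [Fintype L]
    (θ : ℕ → ℝ) (G : K → L → I → J → ℝ) (π : K × L → ℝ) (ζ : K → ℝ)
    (s : Strat I J K I) (t : Strat I J L J) : ℝ :=
  ∑ k, ∑ l, π (k, l) * ζ k *
    ∑' m : ℕ, θ m * stagePay (s.1 k) (t.1 l) (G k l) m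

/-- The `θ`-weighted payoff `γ_θ(π, ŝ, t̂)`. -/
def pay {I J K L : Type*} [Fintype I] [Fintype J] [Fintype K] [Fintype L]
    (θ : ℕ → ℝ) (G : K → L → I → J → ℝ) (π : K × L → ℝ)
    (s : Strat I J K I) (t : Strat I J L J) : ℝ :=
  payA θ G π (fun _ => 1) s t

/-- Maxmin `v⁻_θ(π)` of the repeated game `𝒢_θ(π)`. -/
def vMinus {I J K L : Type*} [Fintype I] [Fintype J] [Fintype K] [Fintype L]
    (θ : ℕ → ℝ) (G : K → L → I → J → ℝ) (π : K × L → ℝ) : ℝ :=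
  ⨆ s : Strat I J K I, ⨅ t : Strat I J L J, pay θ G π s t

/-- Minmax `v⁺_θ(π)` of the repeated game `𝒢_θ(π)`. -/
def vPlus {I J K L : Type*} [Fintype I] [Fintype J] [Fintype K] [Fintype L]
    (θ : ℕ → ℝ) (G : K → L → I → J → ℝ) (π : K × L → ℝ) : ℝ :=
  ⨅ t : Strat I J L J, ⨆ s : Strat I J K I, pay θ G π s t

/-- Dual payoff `h_θ[x,Q;ζ](p,ŝ,t̂) = γ_θ(p⊗Q, ŝ, t̂; ζ) − ⟨p,x⟩`. -/
def hDual {I J K L : Type*} [Fintype I] [Fintype J] [Fintype K] [Fintype L]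
    (θ : ℕ → ℝ) (G : K → L → I → J → ℝ) (x : K → ℝ) (Q : K → L → ℝ)
    (ζ : K → ℝ) (p : K → ℝ) (s : Strat I J K I) (t : Strat I J L J) : ℝ :=
  payA θ G (fun kl => p kl.1 * Q kl.1 kl.2) ζ s t - ∑ k, p k * x k

/-- Maxmin `w⁻_θ(x,Q;ζ)` of the dual game `𝒟[𝒢_θ](x,Q;ζ)`. -/
def wMinus {I J K L : Type*} [Fintype I] [Fintype J] [Fintype K] [Fintype L]
    (θ : ℕ → ℝ) (G : K → L → I → J → ℝ) (x : K → ℝ) (Q : K → L → ℝ)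
    (ζ : K → ℝ) : ℝ :=
  ⨆ ps : stdSimplex ℝ K × Strat I J K I, ⨅ t : Strat I J L J,
    hDual θ G x Q ζ (ps.1 : K → ℝ) ps.2 t

/-- Minmax `w⁺_θ(x,Q;ζ)` of the dual game `𝒟[𝒢_θ](x,Q;ζ)`. -/
def wPlus {I J K L : Type*} [Fintype I] [Fintype J] [Fintype K] [Fintype L]
    (θ : ℕ → ℝ) (G : K → L → I → J → ℝ) (x : K → ℝ) (Q : K → L → ℝ)
    (ζ : K → ℝ) : ℝ :=
  ⨅ t : Strat I J L J, ⨆ ps : stdSimplex ℝ K × Strat I J K I,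
    hDual θ G x Q ζ (ps.1 : K → ℝ) ps.2 t

end RepeatedGames

/-! Player 2 plays the non-revealing action `τ̄` at the first stage and then, once player 1's
first action `i` is observed, an `ε`-optimal strategy of the shifted dual game at
`(x − θ_1 G^Q_{iτ̄}) / (1 − θ_1)`. Against any `(p, ŝ)` the dual payoff then splits along the
first-stage actions `i` into the stage payoff and `(1 − θ_1)` times a continuation dual payoff
whose prior is the unnormalised vector `q_i(k) = p(k) ŝ(k)(i)`. The dual payoff is positively
homogeneous in that prior, so each continuation term is at most `∑_k q_i(k)` times the shifted
value, and these masses add up to one. -/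
section Histories

variable {I J : Type*}

lemma sum_ofFn_succ {α : Type*} [Fintype α] (F : List α → ℝ) (m : ℕ) :
    ∑ h : Fin (m + 1) → α, F (List.ofFn h) = ∑ a : α, ∑ h : Fin m → α, F (a :: List.ofFn h) := by
  rw [← (Fin.consEquiv fun _ : Fin (m + 1) => α).sum_comp, Fintype.sum_prod_type]
  simp [Fin.consEquiv, List.ofFn_succ]

lemma probH_nonneg {s : List (I × J) → I → ℝ} {t : List (I × J) → J → ℝ}
    (hs : ∀ h i, 0 ≤ s h i) (ht : ∀ h j, 0 ≤ t h j) (h : List (I × J)) :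
    0 ≤ probH s t h := by
  induction h generalizing s t with
  | nil => simp [probH]
  | cons a h ih =>
    have := ih (fun h' => hs (a :: h')) (fun h' => ht (a :: h'))
    have := hs [] a.1
    have := ht [] a.2
    simp only [probH]
    positivity

variable [Fintype I] [Fintype J]

lemma sum_probH_ofFn {s : List (I × J) → I → ℝ} {t : List (I × J) → J → ℝ}
    (hs : ∀ h, ∑ i, s h i = 1) (ht : ∀ h, ∑ j, t h j = 1) (m : ℕ) :
    ∑ h : Fin m → I × J, probH s t (List.ofFn h) = 1 := by
  induction m generalizing s t with
  | zero => simp [probH]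
  | succ m ih =>
    simp only [sum_ofFn_succ, probH, ← Finset.mul_sum,
      ih (fun h => hs (_ :: h)) (fun h => ht (_ :: h)), mul_one, Fintype.sum_prod_type, hs, ht]

lemma stagePay_zero (s : List (I × J) → I → ℝ) (t : List (I × J) → J → ℝ) (g : I → J → ℝ) :
    stagePay s t g 0 = ∑ i, ∑ j, s [] i * t [] j * g i j := by
  simp [stagePay, probH]

lemma stagePay_succ (s : List (I × J) → I → ℝ) (t : List (I × J) → J → ℝ)
    (g : I → J → ℝ) (m : ℕ) :
    stagePay s t g (m + 1) = ∑ a : I × J, s [] a.1 * t [] a.2 *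
      stagePay (fun h => s (a :: h)) (fun h => t (a :: h)) g m := by
  unfold stagePay
  rw [sum_ofFn_succ fun h => probH s t h * ∑ i, ∑ j, s h i * t h j * g i j]
  simp only [probH, Finset.mul_sum, mul_assoc]

lemma abs_stagePay_le {s : List (I × J) → I → ℝ} {t : List (I × J) → J → ℝ}
    (hs : ∀ h, s h ∈ stdSimplex ℝ I) (ht : ∀ h, t h ∈ stdSimplex ℝ J)
    {g : I → J → ℝ} {C : ℝ} (hC : ∀ i j, |g i j| ≤ C) (m : ℕ) :
    |stagePay s t g m| ≤ C := by
  have hstage : ∀ h, |∑ i, ∑ j, s h i * t h j * g i j| ≤ C := fun h =>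
    calc |∑ i, ∑ j, s h i * t h j * g i j|
        ≤ ∑ i, ∑ j, s h i * t h j * C := by
          refine (Finset.abs_sum_le_sum_abs _ _).trans <| Finset.sum_le_sum fun i _ =>
            (Finset.abs_sum_le_sum_abs _ _).trans <| Finset.sum_le_sum fun j _ => ?_
          rw [abs_mul, abs_of_nonneg (mul_nonneg ((hs h).1 i) ((ht h).1 j))]
          exact mul_le_mul_of_nonneg_left (hC i j) (mul_nonneg ((hs h).1 i) ((ht h).1 j))
      _ = C := by
          simp only [← Finset.sum_mul, ← Finset.mul_sum, (ht h).2, (hs h).2, mul_one, one_mul]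
  have hprob := probH_nonneg (fun h i => (hs h).1 i) (fun h j => (ht h).1 j)
  calc |stagePay s t g m|
      ≤ ∑ h : Fin m → I × J, probH s t (List.ofFn h) * C := by
        refine (Finset.abs_sum_le_sum_abs _ _).trans <| Finset.sum_le_sum fun h _ => ?_
        rw [abs_mul, abs_of_nonneg (hprob _)]
        exact mul_le_mul_of_nonneg_left (hstage _) (hprob _)
    _ = C := by
        rw [← Finset.sum_mul, sum_probH_ofFn (fun h => (hs h).2) (fun h => (ht h).2), one_mul]

end Histories

section WeightedPayoff

variable {I J : Type*} [Fintype I] [Fintype J] {θ : ℕ → ℝ}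
  {s : List (I × J) → I → ℝ} {t : List (I × J) → J → ℝ}

lemma summable_mul_stagePay (hθ : Summable θ) (hs : ∀ h, s h ∈ stdSimplex ℝ I)
    (ht : ∀ h, t h ∈ stdSimplex ℝ J) (g : I → J → ℝ) :
    Summable fun m => θ m * stagePay s t g m := by
  obtain ⟨C, hC⟩ := Finite.exists_le fun a : I × J => |g a.1 a.2|
  refine Summable.of_norm_bounded (hθ.abs.mul_right C) fun m => ?_
  rw [Real.norm_eq_abs, abs_mul]
  exact mul_le_mul_of_nonneg_left (abs_stagePay_le hs ht (fun i j => hC (i, j)) m) (abs_nonneg _)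

lemma abs_tsum_mul_stagePay_le (hθ : Summable θ) (hs : ∀ h, s h ∈ stdSimplex ℝ I)
    (ht : ∀ h, t h ∈ stdSimplex ℝ J) {g : I → J → ℝ} {C : ℝ} (hC : ∀ i j, |g i j| ≤ C) :
    |∑' m, θ m * stagePay s t g m| ≤ (∑' m, |θ m|) * C := by
  have hf := summable_mul_stagePay hθ hs ht g
  calc |∑' m, θ m * stagePay s t g m| ≤ ∑' m, |θ m * stagePay s t g m| := by
        simpa only [Real.norm_eq_abs] using norm_tsum_le_tsum_norm hf.norm
    _ ≤ ∑' m, |θ m| * C := by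
        refine hf.abs.tsum_le_tsum (fun m => ?_) (hθ.abs.mul_right C)
        rw [abs_mul]
        exact mul_le_mul_of_nonneg_left (abs_stagePay_le hs ht hC m) (abs_nonneg _)
    _ = (∑' m, |θ m|) * C := tsum_mul_right

lemma tsum_mul_stagePay_eq (hθ : Summable θ) (hs : ∀ h, s h ∈ stdSimplex ℝ I)
    (ht : ∀ h, t h ∈ stdSimplex ℝ J) (g : I → J → ℝ) :
    ∑' m, θ m * stagePay s t g m = θ 0 * stagePay s t g 0 +
      ∑ a : I × J, s [] a.1 * t [] a.2 *
        ∑' m, θ (m + 1) * stagePay (fun h => s (a :: h)) (fun h => t (a :: h)) g m := by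
  have hcont : ∀ a : I × J, Summable fun m =>
      θ (m + 1) * stagePay (fun h => s (a :: h)) (fun h => t (a :: h)) g m := fun a =>
    summable_mul_stagePay (s := fun h => s (a :: h)) (t := fun h => t (a :: h))
      ((summable_nat_add_iff 1).2 hθ) (fun h => hs (a :: h)) (fun h => ht (a :: h)) g
  rw [(summable_mul_stagePay hθ hs ht g).tsum_eq_zero_add]
  congr 1
  simp only [stagePay_succ, Finset.mul_sum, ← tsum_mul_left]
  rw [← Summable.tsum_finsetSum fun a _ => (hcont a).mul_left _]
  exact tsum_congr fun m => Finset.sum_congr rfl fun a _ => by ring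

end WeightedPayoff

namespace Strat

variable {I J X A : Type*} [Fintype A]

def shift (s : Strat I J X A) (a : I × J) : Strat I J X A :=
  ⟨fun x h => s.1 x (a :: h), fun x h => s.2 x (a :: h)⟩

def cons (μ : A → ℝ) (hμ : μ ∈ stdSimplex ℝ A) (T : I × J → Strat I J X A) : Strat I J X A :=
  ⟨fun x h => match h with
    | [] => μ
    | a :: h => (T a).1 x h,
   fun x h => match h with
    | [] => hμ
    | a :: h => (T a).2 x h⟩

@[simp]
lemma cons_nil (μ : A → ℝ) (hμ : μ ∈ stdSimplex ℝ A) (T : I × J → Strat I J X A) (x : X) :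
    (cons μ hμ T).1 x [] = μ :=
  rfl

@[simp]
lemma shift_cons (μ : A → ℝ) (hμ : μ ∈ stdSimplex ℝ A) (T : I × J → Strat I J X A)
    (a : I × J) : (cons μ hμ T).shift a = T a :=
  rfl

end Strat

section AuxiliaryPayoff

variable {I J K L : Type*} [Fintype I] [Fintype J] [Fintype K] [Fintype L]
  (θ : ℕ → ℝ) (G : K → L → I → J → ℝ) (π : K × L → ℝ) (ζ : K → ℝ)
  (s : Strat I J K I) (t : Strat I J L J)

lemma payA_const_mul_weights (c : ℝ) :
    payA θ G (fun kl => c * π kl) ζ s t = c * payA θ G π ζ s t := by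
  simp only [payA, Finset.mul_sum, mul_assoc]

lemma payA_const_mul_discount (c : ℝ) :
    payA (fun m => c * θ m) G π ζ s t = c * payA θ G π ζ s t := by
  simp only [payA, mul_assoc, tsum_mul_left, Finset.mul_sum]
  exact Finset.sum_congr rfl fun k _ => Finset.sum_congr rfl fun l _ => by ring

lemma payA_eq_first_add_shift (hθ : Summable θ) :
    payA θ G π ζ s t = θ 0 * ∑ k, ∑ l, π (k, l) * ζ k * stagePay (s.1 k) (t.1 l) (G k l) 0 +
      ∑ a : I × J, payA (fun m => θ (m + 1)) G
        (fun kl => s.1 kl.1 [] a.1 * t.1 kl.2 [] a.2 * π kl) ζ (s.shift a) (t.shift a) := by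
  simp only [payA, tsum_mul_stagePay_eq hθ (s.2 _) (t.2 _), mul_add, Finset.sum_add_distrib,
    Finset.mul_sum]
  congr 1
  · exact Finset.sum_congr rfl fun k _ => Finset.sum_congr rfl fun l _ => by ring
  · symm
    rw [Finset.sum_comm]
    refine Finset.sum_congr rfl fun k _ => ?_
    rw [Finset.sum_comm]
    exact Finset.sum_congr rfl fun l _ => Finset.sum_congr rfl fun a _ => by
      simp only [Strat.shift]; ring

end AuxiliaryPayoff

section DualGame

variable {I J K L : Type*} [Fintype I] [Fintype J] [Fintype K] [Fintype L]
  {θ : ℕ → ℝ} {G : K → L → I → J → ℝ} {x : K → ℝ} {Q : K → L → ℝ} {ζ : K → ℝ}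

lemma hDual_cons_eq (hθ : Summable θ) (p : K → ℝ) (s : Strat I J K I) (τ : J → ℝ)
    (hτ : τ ∈ stdSimplex ℝ J) (T : I × J → Strat I J L J) :
    hDual θ G x Q ζ p s (Strat.cons τ hτ T) =
      ∑ i, ∑ j, τ j * (payA (fun m => θ (m + 1)) G
          (fun kl => p kl.1 * s.1 kl.1 [] i * Q kl.1 kl.2) ζ (s.shift (i, j)) (T (i, j)) -
        ∑ k, p k * s.1 k [] i * (x k - θ 0 * ζ k * ∑ l, ∑ j, Q k l * τ j * G k l i j)) := by
  have hweights : ∀ a : I × J, (fun kl : K × L => s.1 kl.1 [] a.1 * τ a.2 * (p kl.1 * Q kl.1 kl.2))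
      = fun kl => τ a.2 * (p kl.1 * s.1 kl.1 [] a.1 * Q kl.1 kl.2) := fun a => by
    funext kl; ring
  have hprior : ∑ i, ∑ k, p k * s.1 k [] i * x k = ∑ k, p k * x k := by
    rw [Finset.sum_comm]
    refine Finset.sum_congr rfl fun k _ => ?_
    rw [← Finset.sum_mul, ← Finset.mul_sum, (s.2 k []).2, mul_one]
  have hfirst : θ 0 * ∑ k, ∑ l, p k * Q k l * ζ k * ∑ i, ∑ j, s.1 k [] i * τ j * G k l i j =
      ∑ i, ∑ k, p k * s.1 k [] i * (θ 0 * ζ k * ∑ l, ∑ j, Q k l * τ j * G k l i j) := by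
    simp only [Finset.mul_sum]
    rw [Finset.sum_comm (s := Finset.univ (α := I))]
    refine Finset.sum_congr rfl fun k _ => ?_
    rw [Finset.sum_comm]
    exact Finset.sum_congr rfl fun i _ => Finset.sum_congr rfl fun l _ =>
      Finset.sum_congr rfl fun j _ => by ring
  rw [hDual, payA_eq_first_add_shift _ _ _ _ _ _ hθ]
  simp only [Strat.shift_cons, Strat.cons_nil, stagePay_zero, hweights, payA_const_mul_weights,
    Fintype.sum_prod_type, mul_sub, Finset.sum_sub_distrib, ← Finset.sum_mul, hτ.2, one_mul]
  rw [hfirst, hprior]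
  ring

lemma exists_abs_hDual_le (hθ : Summable θ) (hQ : ∀ k, Q k ∈ stdSimplex ℝ L) :
    ∃ B, ∀ p ∈ stdSimplex ℝ K, ∀ s t, |hDual θ G x Q ζ p s t| ≤ B := by
  obtain ⟨C, hC⟩ := Finite.exists_le fun a : K × L × I × J => |G a.1 a.2.1 a.2.2.1 a.2.2.2|
  set D := (∑' m, |θ m|) * |C|
  refine ⟨∑ k, (|ζ k| * D + |x k|), fun p hp s t => ?_⟩
  have hcont : ∀ k l, |∑' m, θ m * stagePay (s.1 k) (t.1 l) (G k l) m| ≤ D := fun k l =>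
    abs_tsum_mul_stagePay_le hθ (s.2 k) (t.2 l) fun i j => (hC (k, l, i, j)).trans (le_abs_self C)
  have hk : ∀ k, |∑ l, p k * Q k l * ζ k * ∑' m, θ m * stagePay (s.1 k) (t.1 l) (G k l) m
      - p k * x k| ≤ |ζ k| * D + |x k| := fun k => by
    have hpk : p k ≤ 1 := stdSimplex.le_one ⟨p, hp⟩ k
    calc _ = p k * |∑ l, Q k l * (ζ k * ∑' m, θ m * stagePay (s.1 k) (t.1 l) (G k l) m) - x k| := by
          rw [← abs_of_nonneg (hp.1 k), ← abs_mul, abs_of_nonneg (hp.1 k), mul_sub,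
            Finset.mul_sum]
          simp only [mul_assoc]
      _ ≤ 1 * (∑ l, Q k l * (|ζ k| * D) + |x k|) := by
          refine mul_le_mul hpk ((abs_sub _ _).trans (add_le_add ?_ le_rfl)) (abs_nonneg _)
            zero_le_one
          refine (Finset.abs_sum_le_sum_abs _ _).trans (Finset.sum_le_sum fun l _ => ?_)
          rw [abs_mul, abs_mul, abs_of_nonneg ((hQ k).1 l)]
          exact mul_le_mul_of_nonneg_left
            (mul_le_mul_of_nonneg_left (hcont k l) (abs_nonneg _)) ((hQ k).1 l)
      _ = |ζ k| * D + |x k| := by rw [← Finset.sum_mul, (hQ k).2, one_mul, one_mul]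
  unfold hDual payA
  rw [← Finset.sum_sub_distrib]
  exact (Finset.abs_sum_le_sum_abs _ _).trans (Finset.sum_le_sum fun k _ => hk k)

lemma bddAbove_range_hDual (hθ : Summable θ) (hQ : ∀ k, Q k ∈ stdSimplex ℝ L)
    (t : Strat I J L J) :
    BddAbove (Set.range fun ps : stdSimplex ℝ K × Strat I J K I =>
      hDual θ G x Q ζ ps.1 ps.2 t) := by
  obtain ⟨B, hB⟩ := exists_abs_hDual_le (G := G) (x := x) (ζ := ζ) hθ hQ
  exact ⟨B, Set.forall_mem_range.2 fun ps => (abs_le.1 (hB _ ps.1.2 ps.2 t)).2⟩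

lemma wPlus_le_of_hDual_le [Nonempty K] [Nonempty I] (hθ : Summable θ)
    (hQ : ∀ k, Q k ∈ stdSimplex ℝ L) {B : ℝ} (t : Strat I J L J)
    (hB : ∀ p ∈ stdSimplex ℝ K, ∀ s, hDual θ G x Q ζ p s t ≤ B) :
    wPlus θ G x Q ζ ≤ B := by
  obtain ⟨B', hB'⟩ := exists_abs_hDual_le (G := G) (x := x) (ζ := ζ) hθ hQ
  have hbdd : BddBelow (Set.range fun t : Strat I J L J =>
      ⨆ ps : stdSimplex ℝ K × Strat I J K I, hDual θ G x Q ζ ps.1 ps.2 t) := by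
    refine ⟨-B', Set.forall_mem_range.2 fun t' => ?_⟩
    obtain ⟨ps⟩ : Nonempty (stdSimplex ℝ K × Strat I J K I) := inferInstance
    exact (neg_le_of_abs_le (hB' _ ps.1.2 ps.2 t')).trans
      (le_ciSup (bddAbove_range_hDual hθ hQ t') ps)
  exact (ciInf_le hbdd t).trans (ciSup_le fun ps => hB _ ps.1.2 ps.2)

lemma exists_hDual_le_wPlus_add [Nonempty J] (hθ : Summable θ)
    (hQ : ∀ k, Q k ∈ stdSimplex ℝ L) {δ : ℝ} (hδ : 0 < δ) :
    ∃ t : Strat I J L J, ∀ p ∈ stdSimplex ℝ K, ∀ s,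
      hDual θ G x Q ζ p s t ≤ wPlus θ G x Q ζ + δ := by
  obtain ⟨t, ht⟩ := exists_lt_of_ciInf_lt (lt_add_of_pos_right (wPlus θ G x Q ζ) hδ)
  exact ⟨t, fun p hp s =>
    ((le_ciSup (bddAbove_range_hDual hθ hQ t) (⟨p, hp⟩, s)).trans ht.le)⟩

lemma payA_sub_le_sum_mul_of_hDual_le {q : K → ℝ} (hq : ∀ k, 0 ≤ q k) {s : Strat I J K I}
    {t : Strat I J L J} {B : ℝ} (hB : ∀ p ∈ stdSimplex ℝ K, hDual θ G x Q ζ p s t ≤ B) :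
    payA θ G (fun kl => q kl.1 * Q kl.1 kl.2) ζ s t - ∑ k, q k * x k ≤ (∑ k, q k) * B := by
  rcases (Finset.sum_nonneg fun k _ => hq k).eq_or_lt with hmass | hmass
  · have hq0 : ∀ k, q k = 0 := fun k =>
      (Finset.sum_eq_zero_iff_of_nonneg fun k _ => hq k).1 hmass.symm k (Finset.mem_univ k)
    simp [payA, hq0]
  · set α := ∑ k, q k
    have hp : (fun k => α⁻¹ * q k) ∈ stdSimplex ℝ K :=
      ⟨fun k => mul_nonneg (inv_nonneg.2 hmass.le) (hq k),
        by rw [← Finset.mul_sum, inv_mul_cancel₀ hmass.ne']⟩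
    have hq' : q = fun k => α * (α⁻¹ * q k) := by
      funext k; rw [mul_inv_cancel_left₀ hmass.ne']
    calc payA θ G (fun kl => q kl.1 * Q kl.1 kl.2) ζ s t - ∑ k, q k * x k
        = α * hDual θ G x Q ζ (fun k => α⁻¹ * q k) s t := by
          conv_lhs => rw [hq']
          rw [hDual, mul_sub, ← payA_const_mul_weights, Finset.mul_sum]
          simp only [mul_assoc]
      _ ≤ α * B := mul_le_mul_of_nonneg_left (hB _ hp) hmass.le

end DualGame

lemma sum_sum_mul_strat_nil_eq_one {I J K : Type*} [Fintype I] [Fintype K] {p : K → ℝ}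
    (hp : p ∈ stdSimplex ℝ K) (s : Strat I J K I) : ∑ i, ∑ k, p k * s.1 k [] i = 1 := by
  rw [Finset.sum_comm]
  simp only [← Finset.mul_sum, fun k => (s.2 k []).2, mul_one, hp.2]

lemma hasSum_shift_div_one_sub {θ : ℕ → ℝ} (hθ : HasSum θ 1) (h0 : θ 0 ≠ 1) :
    HasSum (fun m => θ (m + 1) / (1 - θ 0)) 1 := by
  have hshift : HasSum (fun m => θ (m + 1)) (1 - θ 0) := by
    simpa using (hasSum_nat_add_iff' 1).2 hθ
  simpa [div_self (sub_ne_zero.2 h0.symm)] using hshift.div_const (1 - θ 0)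

/-- Stages are indexed from `0` (so `θ 0 = θ_1`), the value of the dual game is its minmax
`wPlus`, and the max over the finite set `I` is written as a supremum. -/
theorem stmt_16_general
    {K L I J : Type*} [Fintype K] [Fintype L] [Fintype I] [Fintype J]
    [Nonempty K] [Nonempty I] [Nonempty J]
    (G : K → L → I → J → ℝ)
    (θ : ℕ → ℝ) (hθ1 : HasSum θ 1) (hθlt : θ 0 < 1)
    (θplus : ℕ → ℝ) (hθplus : ∀ m, θplus m = θ (m + 1) / (1 - θ 0))
    (x : K → ℝ) (Q : K → L → ℝ) (hQ : ∀ k, Q k ∈ stdSimplex ℝ L)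
    (τbar : J → ℝ) (hτbar : τbar ∈ stdSimplex ℝ J)
    (GQ : I → K → ℝ)
    (hGQ : ∀ i k, GQ i k = ∑ l, ∑ j, Q k l * τbar j * G k l i j) :
    wPlus (I := I) (J := J) θ G x Q (fun _ => 1) ≤
      (1 - θ 0) *
        ⨆ i : I, wPlus θplus G
          (fun k => (x k - θ 0 * GQ i k) / (1 - θ 0)) Q (fun _ => 1) := by
  have hrest : 0 < 1 - θ 0 := sub_pos.2 hθlt
  have hθplus_sum : HasSum θplus 1 := funext hθplus ▸ hasSum_shift_div_one_sub hθ1 hθlt.ne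
  have hθ_shift : (fun m => θ (m + 1)) = fun m => (1 - θ 0) * θplus m := by
    funext m; rw [hθplus, mul_div_cancel₀ _ hrest.ne']
  set X : I → K → ℝ := fun i k => (x k - θ 0 * GQ i k) / (1 - θ 0)
  have hX : ∀ i k, x k - θ 0 * 1 * ∑ l, ∑ j, Q k l * τbar j * G k l i j = (1 - θ 0) * X i k :=
    fun i k => by rw [mul_one, ← hGQ, mul_div_cancel₀ _ hrest.ne']
  set W := ⨆ i, wPlus θplus G (X i) Q (fun _ => 1)
  have hW : ∀ i, wPlus θplus G (X i) Q (fun _ => 1) ≤ W := le_ciSup (Set.finite_range _).bddAbove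
  refine le_of_forall_pos_le_add fun ε hε => ?_
  choose T hT using fun i => exists_hDual_le_wPlus_add (G := G) (x := X i) (ζ := fun _ => 1)
    hθplus_sum.summable hQ (div_pos hε hrest)
  refine wPlus_le_of_hDual_le hθ1.summable hQ (Strat.cons τbar hτbar fun a => T a.1)
    fun p hp s => ?_
  rw [hDual_cons_eq hθ1.summable]
  calc _ ≤ ∑ i, ∑ j, τbar j *
        ((1 - θ 0) * ((∑ k, p k * s.1 k [] i) * (W + ε / (1 - θ 0)))) := by
        refine Finset.sum_le_sum fun i _ => Finset.sum_le_sum fun j _ =>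
          mul_le_mul_of_nonneg_left ?_ (hτbar.1 j)
        simp only [hX, hθ_shift, payA_const_mul_discount, mul_left_comm _ (1 - θ 0),
          ← Finset.mul_sum, ← mul_sub]
        exact mul_le_mul_of_nonneg_left (payA_sub_le_sum_mul_of_hDual_le
          (fun k => mul_nonneg (hp.1 k) ((s.2 k []).1 i))
          fun p' hp' => (hT i p' hp' _).trans (add_le_add_left (hW i) _)) hrest.le
    _ = (1 - θ 0) * W + ε := by
        simp only [← Finset.sum_mul, hτbar.2, one_mul, ← Finset.mul_sum,
          sum_sum_mul_strat_nil_eq_one hp s]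
        rw [mul_add, mul_div_cancel₀ _ hrest.ne']

/-- sub-recursive inequality for non-revealing play. Writing
`w_θ(x,Q) = w_θ(x,Q;𝟏)`, for every mixed action `τ̄ ∈ Δ(J)`:
`w_θ(x,Q) ≤ (1−θ_1)·max_{i∈I} w_{θ⁺}((x−θ_1G^Q_{iτ̄})/(1−θ_1), Q)`.
Stages are indexed from `0` (so `θ 0 = θ_1`); the value of the dual game is its
minmax `wPlus`; the max over the finite set `I` is written as a supremum. -/
theorem stmt_16
    {K L I J : Type*} [Fintype K] [Fintype L] [Fintype I] [Fintype J]
    [Nonempty K] [Nonempty L] [Nonempty I] [Nonempty J]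
    (G : K → L → I → J → ℝ)
    (θ : ℕ → ℝ) (hθ0 : ∀ m, 0 ≤ θ m) (hθ1 : HasSum θ 1) (hθlt : θ 0 < 1)
    (θplus : ℕ → ℝ) (hθplus : ∀ m, θplus m = θ (m + 1) / (1 - θ 0))
    (x : K → ℝ) (Q : K → L → ℝ) (hQ : ∀ k, Q k ∈ stdSimplex ℝ L)
    (τbar : J → ℝ) (hτbar : τbar ∈ stdSimplex ℝ J)
    (GQ : I → K → ℝ)
    (hGQ : ∀ i k, GQ i k = ∑ l, ∑ j, Q k l * τbar j * G k l i j) :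
    wPlus (I := I) (J := J) θ G x Q (fun _ => 1) ≤
      (1 - θ 0) *
        ⨆ i : I, wPlus θplus G
          (fun k => (x k - θ 0 * GQ i k) / (1 - θ 0)) Q (fun _ => 1) :=
  stmt_16_general G θ hθ1 hθlt θplus hθplus x Q hQ τbar hτbar GQ hGQ
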